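/- For all n₁, n₂ ∈ ℕ there exists a constant C > 0 such that for all 2π-periodic continuously differentiable functions h₁, h₂ : ℝ → ℂ, with Fourier coefficients ĥⱼ(m) := (2π)^{−1}·∫₀^{2π} hⱼ(x)·e^{−imx} dx, one has ∑_{k ∈ ℤ, k ≠ 0} ∑_{ℓ ∈ ℤ} ⟨log⟨ℓ⟩⟩^{n₁}·⟨log⟨k−ℓ⟩⟩^{n₂}·|ĥ₁(ℓ)|·|ĥ₂(k−ℓ)| ≤ C·(sup_x |h₁(x)| + sup_x |h₁'(x)|)·(sup_x |h₂(x)| + sup_x |h₂'(x)|), where ⟨x⟩ := (1 + x²)^{1/2}. -/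

import Mathlib

noncomputable section

/-- The Japanese bracket `⟨x⟩ = (1 + x²)^{1/2}`. -/
def jb (x : ℝ) : ℝ := Real.sqrt (1 + x ^ 2)

/-- The `m`-th Fourier coefficient of a `2π`-periodic function,
`ĥ(m) = (2π)⁻¹ ∫₀^{2π} h(x) e^{−imx} dx`. -/
def fCoeff (h : ℝ → ℂ) (m : ℤ) : ℂ :=
  (2 * Real.pi : ℂ)⁻¹ * ∫ x in (0 : ℝ)..(2 * Real.pi),
    h x * Complex.exp (-(Complex.I * (m : ℂ) * (x : ℂ)))

open Real MeasureTheory Function Set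

local instance : Fact (0 < 2 * Real.pi) := ⟨Real.two_pi_pos⟩


lemma jb_nonneg (x : ℝ) : 0 ≤ jb x := Real.sqrt_nonneg _

lemma one_le_jb (x : ℝ) : 1 ≤ jb x := by
  have h : (1:ℝ) = Real.sqrt 1 := by simp
  rw [h, jb]
  exact Real.sqrt_le_sqrt (by nlinarith [sq_nonneg x])

lemma jb_pos (x : ℝ) : 0 < jb x := lt_of_lt_of_le one_pos (one_le_jb x)

lemma jb_sq (x : ℝ) : jb x ^ 2 = 1 + x ^ 2 :=
  Real.sq_sqrt (by nlinarith [sq_nonneg x])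

lemma jb_eq_rpow (x : ℝ) : jb x = (1 + x ^ 2) ^ ((1:ℝ)/2) := by
  rw [jb, Real.sqrt_eq_rpow]

/-- growth bound: `⟨log t⟩^n ≤ C t^{nε}` for `t ≥ 1`. -/
lemma jb_log_le {t ε : ℝ} (ht : 1 ≤ t) (hε : 0 < ε) :
    jb (Real.log t) ≤ (1 + 1/ε) * t ^ ε := by
  have hlog : 0 ≤ Real.log t := Real.log_nonneg ht
  have h1 : jb (Real.log t) ≤ 1 + Real.log t := by
    rw [jb]
    have : 1 + Real.log t ^ 2 ≤ (1 + Real.log t) ^ 2 := by nlinarith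
    calc Real.sqrt (1 + Real.log t ^ 2) ≤ Real.sqrt ((1 + Real.log t) ^ 2) :=
          Real.sqrt_le_sqrt this
      _ = 1 + Real.log t := Real.sqrt_sq (by linarith)
  have h2 : Real.log t ≤ t ^ ε / ε := Real.log_le_rpow_div (by linarith) hε
  have h3 : (1:ℝ) ≤ t ^ ε := by
    calc (1:ℝ) = t ^ (0:ℝ) := (Real.rpow_zero t).symm
      _ ≤ t ^ ε := Real.rpow_le_rpow_of_exponent_le ht hε.le
  have : 1 + Real.log t ≤ t ^ ε + (1/ε) * t ^ ε := by
    rw [div_eq_mul_inv] at h2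
    have : Real.log t ≤ (1/ε) * t ^ ε := by
      rw [one_div]; linarith [h2, mul_comm (t ^ ε) ε⁻¹ ▸ h2]
    linarith
  calc jb (Real.log t) ≤ 1 + Real.log t := h1
    _ ≤ t ^ ε + (1/ε) * t ^ ε := this
    _ = (1 + 1/ε) * t ^ ε := by ring

lemma summable_weight (n : ℕ) :
    Summable (fun ℓ : ℤ => jb (Real.log (jb (ℓ:ℝ))) ^ (2*n) / (1 + (ℓ:ℝ) ^ 2)) := by
  set ε : ℝ := 1 / (4 * (n + 1)) with hεdef
  have hε : 0 < ε := by positivity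
  set C : ℝ := (1 + 1/ε) ^ (2*n) with hCdef
  have hC : 0 ≤ C := by positivity
  have key : ∀ ℓ : ℤ, ℓ ≠ 0 →
      jb (Real.log (jb (ℓ:ℝ))) ^ (2*n) / (1 + (ℓ:ℝ) ^ 2) ≤ C * |(ℓ:ℝ)| ^ (-(3/2 : ℝ)) := by
    intro ℓ hℓ
    have hq : (1:ℝ) ≤ 1 + (ℓ:ℝ) ^ 2 := by nlinarith [sq_nonneg ((ℓ:ℝ))]
    have hqpos : (0:ℝ) < 1 + (ℓ:ℝ) ^ 2 := by linarith
    have ht : 1 ≤ jb (ℓ:ℝ) := one_le_jb _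
    have h1 : jb (Real.log (jb (ℓ:ℝ))) ^ (2*n) ≤ C * (jb (ℓ:ℝ)) ^ ((2*n : ℕ) * ε) := by
      have := jb_log_le ht hε
      calc jb (Real.log (jb (ℓ:ℝ))) ^ (2*n) ≤ ((1 + 1/ε) * (jb (ℓ:ℝ)) ^ ε) ^ (2*n) :=
            pow_le_pow_left₀ (jb_nonneg _) this _
        _ = C * ((jb (ℓ:ℝ)) ^ ε) ^ (2*n : ℕ) := by rw [mul_pow]
        _ = C * (jb (ℓ:ℝ)) ^ (ε * (2*n : ℕ)) := by
              rw [← Real.rpow_natCast ((jb (ℓ:ℝ)) ^ ε) (2*n), ← Real.rpow_mul (jb_nonneg _)]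
        _ = C * (jb (ℓ:ℝ)) ^ ((2*n : ℕ) * ε) := by rw [mul_comm ε]
    have h2 : (jb (ℓ:ℝ)) ^ ((2*n : ℕ) * ε) ≤ (jb (ℓ:ℝ)) ^ ((1:ℝ)/2) := by
      apply Real.rpow_le_rpow_of_exponent_le ht
      rw [hεdef]
      push_cast
      rw [mul_one_div, div_le_div_iff₀ (by positivity) (by norm_num)]
      nlinarith [Nat.cast_nonneg (α := ℝ) n]
    have h3 : (jb (ℓ:ℝ)) ^ ((1:ℝ)/2) = (1 + (ℓ:ℝ) ^ 2) ^ ((1:ℝ)/4) := by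
      rw [jb_eq_rpow, ← Real.rpow_mul hqpos.le]
      norm_num
    have h4 : jb (Real.log (jb (ℓ:ℝ))) ^ (2*n) / (1 + (ℓ:ℝ) ^ 2)
        ≤ C * (1 + (ℓ:ℝ) ^ 2) ^ (-(3/4 : ℝ)) := by
      have hnum : jb (Real.log (jb (ℓ:ℝ))) ^ (2*n) ≤ C * (1 + (ℓ:ℝ) ^ 2) ^ ((1:ℝ)/4) := by
        calc jb (Real.log (jb (ℓ:ℝ))) ^ (2*n) ≤ C * (jb (ℓ:ℝ)) ^ ((2*n : ℕ) * ε) := h1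
          _ ≤ C * (jb (ℓ:ℝ)) ^ ((1:ℝ)/2) := by
              exact mul_le_mul_of_nonneg_left h2 hC
          _ = C * (1 + (ℓ:ℝ) ^ 2) ^ ((1:ℝ)/4) := by rw [h3]
      rw [div_le_iff₀ hqpos]
      calc jb (Real.log (jb (ℓ:ℝ))) ^ (2*n) ≤ C * (1 + (ℓ:ℝ) ^ 2) ^ ((1:ℝ)/4) := hnum
        _ = C * (1 + (ℓ:ℝ) ^ 2) ^ (-(3/4 : ℝ)) * (1 + (ℓ:ℝ) ^ 2) := by
            rw [mul_assoc, ← Real.rpow_add_one hqpos.ne' (-(3/4:ℝ))]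
            norm_num
    refine h4.trans ?_
    have hl2 : (0:ℝ) < |(ℓ:ℝ)| := by
      simp only [abs_pos]
      exact_mod_cast hℓ
    have hbase : |(ℓ:ℝ)| ^ (2:ℕ) ≤ 1 + (ℓ:ℝ) ^ 2 := by
      rw [sq_abs]; linarith
    have : (1 + (ℓ:ℝ) ^ 2) ^ (-(3/4 : ℝ)) ≤ (|(ℓ:ℝ)| ^ (2:ℕ)) ^ (-(3/4 : ℝ)) := by
      apply Real.rpow_le_rpow_of_nonpos (by positivity) hbase (by norm_num)
    refine (mul_le_mul_of_nonneg_left this hC).trans_eq ?_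
    rw [← Real.rpow_natCast |(ℓ:ℝ)| 2, ← Real.rpow_mul (abs_nonneg _)]
    norm_num
  have hsum : Summable (fun ℓ : ℤ => C * |(ℓ:ℝ)| ^ (-(3/2 : ℝ))) :=
    (Real.summable_abs_int_rpow (by norm_num)).mul_left C
  apply Summable.of_norm_bounded_eventually hsum
  have hfin : ({(0:ℤ)} : Set ℤ).Finite := Set.finite_singleton 0
  apply Filter.mem_of_superset hfin.compl_mem_cofinite
  intro ℓ hℓ
  simp only [Set.mem_compl_iff, Set.mem_singleton_iff] at hℓ
  show ‖_‖ ≤ _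
  rw [Real.norm_eq_abs,
    abs_of_nonneg (div_nonneg (pow_nonneg (jb_nonneg _) _) (by positivity))]
  exact key ℓ hℓ

lemma fCoeff_eq_fourierCoeff (h : ℝ → ℂ) (hp : Function.Periodic h (2 * Real.pi)) (m : ℤ) :
    fCoeff h m = fourierCoeff hp.lift m := by
  rw [fourierCoeff_eq_intervalIntegral hp.lift m 0, zero_add]
  rw [fCoeff]
  have hpi : (2 * Real.pi : ℝ) ≠ 0 := by positivity
  have : ∀ x : ℝ, (fourier (-m) : C(AddCircle (2 * Real.pi), ℂ)) ↑x • hp.lift ↑x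
      = h x * Complex.exp (-(Complex.I * (m : ℂ) * (x : ℂ))) := by
    intro x
    rw [fourier_coe_apply, Function.Periodic.lift_coe, smul_eq_mul, mul_comm]
    congr 1
    congr 1
    rw [div_eq_iff (by exact_mod_cast hpi : ((2 * Real.pi : ℝ) : ℂ) ≠ 0)]
    push_cast
    ring
  rw [intervalIntegral.integral_congr (g := fun x => h x * Complex.exp (-(Complex.I * (m : ℂ) * (x : ℂ)))) (fun x _ => this x)]
  rw [Complex.real_smul]
  congr 1
  push_cast
  rw [one_div]

lemma periodic_lift_continuous {h : ℝ → ℂ} (hp : Function.Periodic h (2 * Real.pi))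
    (hc : Continuous h) : Continuous hp.lift :=
  hc.quotient_liftOn' _

lemma bessel {g : ℝ → ℂ} (hc : Continuous g) (hp : Function.Periodic g (2 * Real.pi))
    {M : ℝ} (hM : ∀ x, ‖g x‖ ≤ M) :
    Summable (fun m : ℤ => ‖fCoeff g m‖ ^ 2) ∧ (∑' m : ℤ, ‖fCoeff g m‖ ^ 2) ≤ M ^ 2 := by
  have hl : Continuous hp.lift := periodic_lift_continuous hp hc
  set cf : C(AddCircle (2 * Real.pi), ℂ) := ⟨hp.lift, hl⟩ with hcf
  set F := ContinuousMap.toLp (E := ℂ) 2 AddCircle.haarAddCircle ℂ cf with hF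
  have hae : (↑↑F : AddCircle (2 * Real.pi) → ℂ) =ᵐ[AddCircle.haarAddCircle] cf :=
    ContinuousMap.coeFn_toLp AddCircle.haarAddCircle cf
  have hcoeff : ∀ m : ℤ, fourierCoeff (↑↑F : AddCircle (2 * Real.pi) → ℂ) m = fCoeff g m := by
    intro m
    rw [fCoeff_eq_fourierCoeff g hp m]
    unfold fourierCoeff
    apply integral_congr_ae
    filter_upwards [hae] with t ht
    rw [ht]
    rfl
  have hsummable : Summable (fun m : ℤ => ‖fCoeff g m‖ ^ 2) := by
    have hmem := lp.memℓp (fourierBasis.repr F)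
    rw [memℓp_gen_iff (by norm_num : (0:ℝ) < (2 : ENNReal).toReal)] at hmem
    have : (fun i : ℤ => ‖(fourierBasis.repr F) i‖ ^ (2 : ENNReal).toReal)
        = fun m : ℤ => ‖fCoeff g m‖ ^ 2 := by
      funext i
      rw [fourierBasis_repr, hcoeff i]
      rw [show ((2:ENNReal).toReal) = ((2:ℕ):ℝ) by norm_num, Real.rpow_natCast]
    rwa [this] at hmem
  refine ⟨hsummable, ?_⟩
  have hpar := tsum_sq_fourierCoeff F
  have heq : (∑' m : ℤ, ‖fCoeff g m‖ ^ 2)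
      = ∫ t, ‖(↑↑F : AddCircle (2 * Real.pi) → ℂ) t‖ ^ 2 ∂AddCircle.haarAddCircle := by
    rw [← hpar]
    exact tsum_congr fun m => by rw [hcoeff m]
  rw [heq]
  have hM0 : (0:ℝ) ≤ M := le_trans (norm_nonneg _) (hM 0)
  have hle : ∀ᵐ t ∂(AddCircle.haarAddCircle),
      ‖(↑↑F : AddCircle (2 * Real.pi) → ℂ) t‖ ^ 2 ≤ M ^ 2 := by
    filter_upwards [hae] with t ht
    rw [ht]
    induction t using QuotientAddGroup.induction_on with
    | H x =>
      have : cf ↑x = g x := Function.Periodic.lift_coe hp x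
      rw [show (cf : AddCircle (2 * Real.pi) → ℂ) ↑x = g x from this]
      exact pow_le_pow_left₀ (norm_nonneg _) (hM x) 2
  calc (∫ t, ‖(↑↑F : AddCircle (2 * Real.pi) → ℂ) t‖ ^ 2 ∂AddCircle.haarAddCircle)
      ≤ ∫ _t, M ^ 2 ∂(AddCircle.haarAddCircle : Measure (AddCircle (2 * Real.pi))) := by
        apply integral_mono_of_nonneg
        · filter_upwards with t using by positivity
        · exact integrable_const _
        · exact hle
    _ = M ^ 2 := by simp

lemma periodic_deriv' {h : ℝ → ℂ} (hp : Function.Periodic h (2 * Real.pi)) :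
    Function.Periodic (deriv h) (2 * Real.pi) := by
  intro x
  have : (fun y => h (y + 2 * Real.pi)) = h := funext fun y => hp y
  calc deriv h (x + 2 * Real.pi) = deriv (fun y => h (y + 2 * Real.pi)) x :=
        (deriv_comp_add_const h (2 * Real.pi) x).symm
    _ = deriv h x := by rw [this]

lemma fCoeff_deriv {h : ℝ → ℂ} (hp : Function.Periodic h (2 * Real.pi))
    (hd : ContDiff ℝ 1 h) (m : ℤ) :
    fCoeff (deriv h) m = Complex.I * (m : ℂ) * fCoeff h m := by
  set c : ℂ := -(Complex.I * (m : ℂ)) with hc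
  have hexp : ∀ x : ℝ, Complex.exp (-(Complex.I * (m : ℂ) * (x : ℂ))) = Complex.exp (c * x) := by
    intro x; congr 1; rw [hc]; ring
  have hu : ∀ x ∈ Set.uIcc (0:ℝ) (2 * Real.pi),
      HasDerivAt (fun y : ℝ => Complex.exp (c * y)) (Complex.exp (c * x) * c) x := by
    intro x _
    have h1 : HasDerivAt (fun y : ℝ => ((y : ℂ))) 1 x := by
      simpa using (hasDerivAt_id x).ofReal_comp
    have h2 : HasDerivAt (fun y : ℝ => c * (y : ℂ)) c x := by
      simpa using h1.const_mul c
    exact h2.cexp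
  have hv : ∀ x ∈ Set.uIcc (0:ℝ) (2 * Real.pi), HasDerivAt h (deriv h x) x := fun x _ =>
    (hd.differentiable one_ne_zero x).hasDerivAt
  have hcont_exp : Continuous fun x : ℝ => Complex.exp (c * x) :=
    Complex.continuous_exp.comp (continuous_const.mul Complex.continuous_ofReal)
  have hu' : IntervalIntegrable (fun x : ℝ => Complex.exp (c * x) * c) volume 0 (2 * Real.pi) :=
    (hcont_exp.mul continuous_const).intervalIntegrable _ _
  have hv' : IntervalIntegrable (deriv h) volume 0 (2 * Real.pi) :=
    (hd.continuous_deriv le_rfl).intervalIntegrable _ _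
  have hparts := intervalIntegral.integral_mul_deriv_eq_deriv_mul hu hv hu' hv'
  have hub : Complex.exp (c * (2 * Real.pi : ℝ)) = 1 := by
    rw [show c * ((2 * Real.pi : ℝ) : ℂ) = (-m : ℤ) * (2 * Real.pi * Complex.I) by
      push_cast; rw [hc]; ring]
    exact Complex.exp_int_mul_two_pi_mul_I (-m)
  have hperiod : h (2 * Real.pi) = h 0 := by
    have := hp 0; rwa [zero_add] at this
  rw [fCoeff, fCoeff]
  rw [intervalIntegral.integral_congr
    (g := fun x => Complex.exp (c * x) * deriv h x)
    (fun x _ => by rw [hexp x]; ring)]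
  rw [hparts, hub]
  rw [intervalIntegral.integral_congr
    (g := fun x => c * (h x * Complex.exp (c * x)))
    (f := fun x => Complex.exp (c * x) * c * h x)
    (fun x _ => by ring)]
  rw [intervalIntegral.integral_const_mul]
  rw [intervalIntegral.integral_congr
    (g := fun x => h x * Complex.exp (c * x))
    (f := fun x => h x * Complex.exp (-(Complex.I * (m : ℂ) * (x : ℂ))))
    (fun x _ => by
      show h x * Complex.exp (-(Complex.I * (m : ℂ) * (x : ℂ))) = h x * Complex.exp (c * x)
      rw [hexp x])]
  simp only [Complex.ofReal_zero, mul_zero, Complex.exp_zero, hperiod, hc]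
  ring

lemma sup_bound {g : ℝ → ℂ} (hc : Continuous g) (hp : Function.Periodic g (2 * Real.pi)) :
    ∀ x : ℝ, ‖g x‖ ≤ ⨆ y : ℝ, ‖g y‖ := by
  have hbdd : BddAbove (Set.range fun x : ℝ => ‖g x‖) := by
    have hsub : (Set.range fun x : ℝ => ‖g x‖)
        ⊆ (fun x : ℝ => ‖g x‖) '' (Set.Icc 0 (2 * Real.pi)) := by
      rintro - ⟨x, rfl⟩
      obtain ⟨y, hy, hxy⟩ := hp.exists_mem_Ico₀ Real.two_pi_pos x
      exact ⟨y, ⟨hy.1, hy.2.le⟩, by show ‖g y‖ = ‖g x‖; rw [hxy]⟩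
    exact ((isCompact_Icc.image (hc.norm)).bddAbove).mono hsub
  exact fun x => le_ciSup hbdd x

lemma amgm {S : ℝ} (hS : 0 < S) (u v : ℝ) : u * v ≤ S/2 * u^2 + 1/(2*S) * v^2 := by
  have h2S : (0:ℝ) < 2*S := by linarith
  have key : S/2 * u^2 + 1/(2*S) * v^2 - u*v = (S*u - v)^2 / (2*S) := by
    field_simp
    ring
  nlinarith [div_nonneg (sq_nonneg (S*u - v)) h2S.le]

lemma key_single (n : ℕ) :
    ∃ C : ℝ, 0 < C ∧ ∀ h : ℝ → ℂ, Function.Periodic h (2 * Real.pi) → ContDiff ℝ 1 h →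
      Summable (fun ℓ : ℤ => jb (Real.log (jb (ℓ:ℝ))) ^ n * ‖fCoeff h ℓ‖) ∧
      (∑' ℓ : ℤ, jb (Real.log (jb (ℓ:ℝ))) ^ n * ‖fCoeff h ℓ‖)
        ≤ C * ((⨆ x : ℝ, ‖h x‖) + ⨆ x : ℝ, ‖deriv h x‖) := by
  set A := ∑' ℓ : ℤ, jb (Real.log (jb (ℓ:ℝ))) ^ (2*n) / (1 + (ℓ:ℝ) ^ 2) with hA
  have hA0 : 0 ≤ A :=
    tsum_nonneg fun ℓ => div_nonneg (pow_nonneg (jb_nonneg _) _) (by positivity)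
  refine ⟨(A + 1) / 2, by positivity, ?_⟩
  intro h hp hd
  have hc : Continuous h := hd.continuous
  have hdc : Continuous (deriv h) := hd.continuous_deriv le_rfl
  have hp' := periodic_deriv' hp
  set M1 := ⨆ x : ℝ, ‖h x‖ with hM1def
  set M2 := ⨆ x : ℝ, ‖deriv h x‖ with hM2def
  have hM1 : ∀ x, ‖h x‖ ≤ M1 := sup_bound hc hp
  have hM2 : ∀ x, ‖deriv h x‖ ≤ M2 := sup_bound hdc hp'
  have hM10 : 0 ≤ M1 := le_trans (norm_nonneg _) (hM1 0)
  have hM20 : 0 ≤ M2 := le_trans (norm_nonneg _) (hM2 0)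
  by_cases hS : M1 + M2 = 0
  · -- degenerate case : h ≡ 0
    have hM1z : M1 = 0 := by linarith
    have hzero : ∀ x, h x = 0 := by
      intro x
      have := hM1 x
      rw [hM1z] at this
      exact norm_le_zero_iff.mp this
    have hco : ∀ ℓ : ℤ, fCoeff h ℓ = 0 := by
      intro ℓ
      have : h = fun _ => (0:ℂ) := funext hzero
      rw [fCoeff, this]
      simp
    have hfz : (fun ℓ : ℤ => jb (Real.log (jb (ℓ:ℝ))) ^ n * ‖fCoeff h ℓ‖)
        = fun _ => (0:ℝ) := by
      funext ℓ; rw [hco ℓ]; simp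
    rw [hfz]
    refine ⟨summable_zero, ?_⟩
    rw [tsum_zero, hS, mul_zero]
  · have hSpos : 0 < M1 + M2 := lt_of_le_of_ne (by linarith) (Ne.symm hS)
    set S := M1 + M2 with hSdef
    obtain ⟨hb1s, hb1⟩ := bessel hc hp hM1
    obtain ⟨hb2s, hb2⟩ := bessel hdc hp' hM2
    have hterm : ∀ ℓ : ℤ, jb (Real.log (jb (ℓ:ℝ))) ^ n * ‖fCoeff h ℓ‖
        ≤ S/2 * (jb (Real.log (jb (ℓ:ℝ))) ^ (2*n) / (1 + (ℓ:ℝ) ^ 2))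
          + 1/(2*S) * (‖fCoeff h ℓ‖ ^ 2 + ‖fCoeff (deriv h) ℓ‖ ^ 2) := by
      intro ℓ
      have hrel : ‖fCoeff (deriv h) ℓ‖ ^ 2 = (ℓ:ℝ) ^ 2 * ‖fCoeff h ℓ‖ ^ 2 := by
        rw [fCoeff_deriv hp hd ℓ, norm_mul, norm_mul, Complex.norm_I, one_mul, mul_pow]
        congr 1
        rw [show ((ℓ:ℂ)) = (((ℓ:ℝ)):ℂ) by push_cast; rfl, Complex.norm_real,
          Real.norm_eq_abs, sq_abs]
      rw [hrel]
      set w := jb (Real.log (jb (ℓ:ℝ))) ^ n with hw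
      set a := ‖fCoeff h ℓ‖ with ha
      have hw0 : 0 ≤ w := pow_nonneg (jb_nonneg _) _
      have ha0 : 0 ≤ a := norm_nonneg _
      set J := jb (ℓ:ℝ) with hJ
      have hJ1 : 1 ≤ J := one_le_jb _
      have hJ0 : 0 < J := jb_pos _
      have hJ2 : 1 + (ℓ:ℝ) ^ 2 = J ^ 2 := (jb_sq _).symm
      have hw2 : jb (Real.log (jb (ℓ:ℝ))) ^ (2*n) = w ^ 2 := by
        rw [hw, ← pow_mul, Nat.mul_comm]
      rw [hJ2, hw2]
      have hsplit : a ^ 2 + (ℓ:ℝ) ^ 2 * a ^ 2 = (J * a) ^ 2 := by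
        have hl2 : (ℓ:ℝ) ^ 2 = J ^ 2 - 1 := by rw [← hJ2]; ring
        rw [hl2]; ring
      calc w * a = (w/J) * (J*a) := by
            field_simp
        _ ≤ S/2 * (w/J)^2 + 1/(2*S) * (J*a)^2 := amgm hSpos _ _
        _ = S/2 * (w^2 / J^2) + 1/(2*S) * (a^2 + (ℓ:ℝ)^2 * a^2) := by
            rw [div_pow, hsplit]
    have hg : Summable (fun ℓ : ℤ =>
        S/2 * (jb (Real.log (jb (ℓ:ℝ))) ^ (2*n) / (1 + (ℓ:ℝ) ^ 2))
          + 1/(2*S) * (‖fCoeff h ℓ‖ ^ 2 + ‖fCoeff (deriv h) ℓ‖ ^ 2)) :=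
      ((summable_weight n).mul_left _).add ((hb1s.add hb2s).mul_left _)
    have hnn : ∀ ℓ : ℤ, 0 ≤ jb (Real.log (jb (ℓ:ℝ))) ^ n * ‖fCoeff h ℓ‖ :=
      fun ℓ => mul_nonneg (pow_nonneg (jb_nonneg _) _) (norm_nonneg _)
    have hls : Summable (fun ℓ : ℤ => jb (Real.log (jb (ℓ:ℝ))) ^ n * ‖fCoeff h ℓ‖) :=
      Summable.of_nonneg_of_le hnn hterm hg
    refine ⟨hls, ?_⟩
    have h1 : (∑' ℓ : ℤ, jb (Real.log (jb (ℓ:ℝ))) ^ n * ‖fCoeff h ℓ‖)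
        ≤ ∑' ℓ : ℤ, (S/2 * (jb (Real.log (jb (ℓ:ℝ))) ^ (2*n) / (1 + (ℓ:ℝ) ^ 2))
          + 1/(2*S) * (‖fCoeff h ℓ‖ ^ 2 + ‖fCoeff (deriv h) ℓ‖ ^ 2)) :=
      Summable.tsum_le_tsum hterm hls hg
    have h2 : (∑' ℓ : ℤ, (S/2 * (jb (Real.log (jb (ℓ:ℝ))) ^ (2*n) / (1 + (ℓ:ℝ) ^ 2))
          + 1/(2*S) * (‖fCoeff h ℓ‖ ^ 2 + ‖fCoeff (deriv h) ℓ‖ ^ 2)))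
        = S/2 * A + 1/(2*S) * ((∑' ℓ : ℤ, ‖fCoeff h ℓ‖ ^ 2)
            + ∑' ℓ : ℤ, ‖fCoeff (deriv h) ℓ‖ ^ 2) := by
      rw [Summable.tsum_add ((summable_weight n).mul_left _) ((hb1s.add hb2s).mul_left _),
        tsum_mul_left, tsum_mul_left, Summable.tsum_add hb1s hb2s]
    have h3 : 1/(2*S) * ((∑' ℓ : ℤ, ‖fCoeff h ℓ‖ ^ 2)
            + ∑' ℓ : ℤ, ‖fCoeff (deriv h) ℓ‖ ^ 2) ≤ S / 2 := by
      have hsum2 : (∑' ℓ : ℤ, ‖fCoeff h ℓ‖ ^ 2)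
            + (∑' ℓ : ℤ, ‖fCoeff (deriv h) ℓ‖ ^ 2) ≤ S ^ 2 := by
        have : M1 ^ 2 + M2 ^ 2 ≤ S ^ 2 := by rw [hSdef]; nlinarith
        linarith [hb1, hb2]
      rw [div_mul_eq_mul_div, one_mul, div_le_div_iff₀ (by linarith) (by norm_num)]
      nlinarith
    calc (∑' ℓ : ℤ, jb (Real.log (jb (ℓ:ℝ))) ^ n * ‖fCoeff h ℓ‖)
        ≤ S/2 * A + 1/(2*S) * ((∑' ℓ : ℤ, ‖fCoeff h ℓ‖ ^ 2)
            + ∑' ℓ : ℤ, ‖fCoeff (deriv h) ℓ‖ ^ 2) := by rw [← h2]; exact h1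
      _ ≤ S/2 * A + S/2 := by linarith
      _ = (A + 1)/2 * S := by ring

/-- Weighted bilinear Fourier-coefficient bound: for all `n₁, n₂ ∈ ℕ` there is `C > 0`
such that for all `2π`-periodic continuously differentiable `h₁, h₂ : ℝ → ℂ`, the
double sum `∑_{k ≠ 0} ∑_ℓ ⟨log⟨ℓ⟩⟩^{n₁} ⟨log⟨k−ℓ⟩⟩^{n₂} |ĥ₁(ℓ)| |ĥ₂(k−ℓ)|` converges
and is bounded by `C·(sup|h₁| + sup|h₁'|)·(sup|h₂| + sup|h₂'|)`. -/
theorem weighted_fourier_convolution_bound (n₁ n₂ : ℕ) :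
    ∃ C : ℝ, 0 < C ∧
      ∀ h₁ h₂ : ℝ → ℂ,
        Function.Periodic h₁ (2 * Real.pi) → Function.Periodic h₂ (2 * Real.pi) →
        ContDiff ℝ 1 h₁ → ContDiff ℝ 1 h₂ →
        Summable (fun p : {k : ℤ // k ≠ 0} × ℤ =>
          jb (Real.log (jb (p.2 : ℝ))) ^ n₁
            * jb (Real.log (jb (((p.1 : ℤ) : ℝ) - (p.2 : ℝ)))) ^ n₂
            * ‖fCoeff h₁ p.2‖ * ‖fCoeff h₂ ((p.1 : ℤ) - p.2)‖) ∧
        (∑' p : {k : ℤ // k ≠ 0} × ℤ,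
          jb (Real.log (jb (p.2 : ℝ))) ^ n₁
            * jb (Real.log (jb (((p.1 : ℤ) : ℝ) - (p.2 : ℝ)))) ^ n₂
            * ‖fCoeff h₁ p.2‖ * ‖fCoeff h₂ ((p.1 : ℤ) - p.2)‖)
          ≤ C * ((⨆ x : ℝ, ‖h₁ x‖) + ⨆ x : ℝ, ‖deriv h₁ x‖)
              * ((⨆ x : ℝ, ‖h₂ x‖) + ⨆ x : ℝ, ‖deriv h₂ x‖) := by
  obtain ⟨C₁, hC₁, H₁⟩ := key_single n₁
  obtain ⟨C₂, hC₂, H₂⟩ := key_single n₂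
  refine ⟨C₁ * C₂, mul_pos hC₁ hC₂, ?_⟩
  intro h₁ h₂ hp₁ hp₂ hd₁ hd₂
  obtain ⟨S₁, T₁⟩ := H₁ h₁ hp₁ hd₁
  obtain ⟨S₂, T₂⟩ := H₂ h₂ hp₂ hd₂
  set F : ℤ → ℝ := fun ℓ => jb (Real.log (jb (ℓ:ℝ))) ^ n₁ * ‖fCoeff h₁ ℓ‖ with hF
  set G : ℤ → ℝ := fun m => jb (Real.log (jb (m:ℝ))) ^ n₂ * ‖fCoeff h₂ m‖ with hG
  have hF0 : ∀ ℓ, 0 ≤ F ℓ := fun ℓ => mul_nonneg (pow_nonneg (jb_nonneg _) _) (norm_nonneg _)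
  have hG0 : ∀ m, 0 ≤ G m := fun m => mul_nonneg (pow_nonneg (jb_nonneg _) _) (norm_nonneg _)
  have hFG : Summable (fun q : ℤ × ℤ => F q.1 * G q.2) :=
    S₁.mul_of_nonneg S₂ hF0 hG0
  set e : {k : ℤ // k ≠ 0} × ℤ → ℤ × ℤ := fun p => ((p.2 : ℤ), (p.1 : ℤ) - p.2) with he
  have hinj : Function.Injective e := by
    rintro ⟨⟨k, hk⟩, ℓ⟩ ⟨⟨k', hk'⟩, ℓ'⟩ hpq
    simp only [he, Prod.mk.injEq] at hpq
    obtain ⟨h1, h2⟩ := hpq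
    subst h1
    have : k = k' := by omega
    subst this
    rfl
  have heq : (fun p : {k : ℤ // k ≠ 0} × ℤ =>
      jb (Real.log (jb (p.2 : ℝ))) ^ n₁
        * jb (Real.log (jb (((p.1 : ℤ) : ℝ) - (p.2 : ℝ)))) ^ n₂
        * ‖fCoeff h₁ p.2‖ * ‖fCoeff h₂ ((p.1 : ℤ) - p.2)‖)
      = (fun q : ℤ × ℤ => F q.1 * G q.2) ∘ e := by
    funext p
    simp only [Function.comp_apply, he, hF, hG]
    have hcast : (((p.1 : ℤ) : ℝ) - (p.2 : ℝ)) = (((p.1 : ℤ) - p.2 : ℤ) : ℝ) := by push_cast; ring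
    rw [hcast]
    ring
  constructor
  · rw [heq]
    exact hFG.comp_injective hinj
  · rw [heq]
    have step1 : tsum ((fun q : ℤ × ℤ => F q.1 * G q.2) ∘ e) ≤ ∑' q : ℤ × ℤ, F q.1 * G q.2 :=
      tsum_comp_le_tsum_of_inj hFG (fun q => mul_nonneg (hF0 _) (hG0 _)) hinj
    have step2 : (∑' q : ℤ × ℤ, F q.1 * G q.2) = (∑' ℓ, F ℓ) * ∑' m, G m := by
      exact (Summable.tsum_mul_tsum S₁ S₂ hFG).symm
    have hG_tsum_nonneg : 0 ≤ ∑' m, G m := tsum_nonneg hG0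
    have hT1nn : 0 ≤ C₁ * ((⨆ x : ℝ, ‖h₁ x‖) + ⨆ x : ℝ, ‖deriv h₁ x‖) :=
      le_trans (tsum_nonneg hF0) T₁
    calc tsum ((fun q : ℤ × ℤ => F q.1 * G q.2) ∘ e)
        ≤ (∑' ℓ, F ℓ) * ∑' m, G m := by rw [← step2]; exact step1
      _ ≤ (C₁ * ((⨆ x : ℝ, ‖h₁ x‖) + ⨆ x : ℝ, ‖deriv h₁ x‖))
          * (C₂ * ((⨆ x : ℝ, ‖h₂ x‖) + ⨆ x : ℝ, ‖deriv h₂ x‖)) :=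
        mul_le_mul T₁ T₂ hG_tsum_nonneg hT1nn
      _ = C₁ * C₂ * ((⨆ x : ℝ, ‖h₁ x‖) + ⨆ x : ℝ, ‖deriv h₁ x‖)
          * ((⨆ x : ℝ, ‖h₂ x‖) + ⨆ x : ℝ, ‖deriv h₂ x‖) := by ring
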